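/- With κ₁ = 0 and κ₂ > 0 small, if r > r_anti (equivalently σ r²(r² − r_m²) > 2κ₂) then det(J_in) > 0 and det(J_anti) < 0, so (given tr < 0 and real eigenvalues) the inphase state is stable and the antiphase state is a saddle; if r_in' < r < r_in where σ r²(r_m² − r²) > 2κ₂, the stabilities are reversed. -/
import Mathlib


def detJin (u σ rm κ₁ κ₂ r : ℝ) : ℝ :=
  -2 * (u + 6 * r ^ 2 - 5 * r ^ 4) * κ₁ - 2 * σ * r ^ 2 * (rm ^ 2 - r ^ 2) * κ₂
    + 2 * κ₁ ^ 2 + 4 * κ₂ ^ 2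

def detJanti (u σ rm κ₁ κ₂ r : ℝ) : ℝ :=
  2 * (u + 6 * r ^ 2 - 5 * r ^ 4) * κ₁ + 2 * σ * r ^ 2 * (rm ^ 2 - r ^ 2) * κ₂
    + 2 * κ₁ ^ 2 + 4 * κ₂ ^ 2


lemma neg_roots (T D : ℝ) (hT : T < 0) (hD : 0 < D) :
    ∀ lam : ℝ, lam ^ 2 - T * lam + D = 0 → lam < 0 := by
  intro lam h
  by_contra hle
  push_neg at hle
  nlinarith [sq_nonneg lam]

lemma saddle_roots (T D : ℝ) (hD : D < 0) :
    ∃ lam₁ lam₂ : ℝ, lam₁ < 0 ∧ 0 < lam₂ ∧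
      lam₁ ^ 2 - T * lam₁ + D = 0 ∧ lam₂ ^ 2 - T * lam₂ + D = 0 := by
  have hdisc : 0 < T ^ 2 - 4 * D := by nlinarith [sq_nonneg T]
  set s := Real.sqrt (T ^ 2 - 4 * D) with hs
  have hs2 : s ^ 2 = T ^ 2 - 4 * D := Real.sq_sqrt hdisc.le
  have hsT : |T| < s := by
    have : |T| = Real.sqrt (T ^ 2) := (Real.sqrt_sq_eq_abs T).symm
    rw [this]
    exact Real.sqrt_lt_sqrt (sq_nonneg T) (by linarith)
  have h1 : T - s < 0 := by
    have h := neg_abs_le T; have h2 := le_abs_self T; linarith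
  have h2 : 0 < T + s := by
    have h := neg_abs_le T; have h2 := le_abs_self T; linarith
  refine ⟨(T - s) / 2, (T + s) / 2, by linarith, by linarith, ?_, ?_⟩ <;> nlinarith [hs2]

/-- With `κ₁ = 0`, `κ₂ > 0`: beyond the antiphase bifurcation amplitude the inphase state is
stable and the antiphase state is a saddle, and the stabilities are reversed where
`σ r² (r_m² − r²) > 2κ₂`.  Stability is expressed through the signs of the roots of the
characteristic polynomial `λ² − T λ + det` with `T = u + 6r² − 5r⁴` the common trace. -/
theorem stmt_15 (u σ rm κ₂ r : ℝ) (hσ : 0 < σ) (hrm : 0 < rm) (hκ₂ : 0 < κ₂) :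
    (σ * r ^ 2 * (r ^ 2 - rm ^ 2) > 2 * κ₂ →
      0 < detJin u σ rm 0 κ₂ r ∧ detJanti u σ rm 0 κ₂ r < 0 ∧
      (u + 6 * r ^ 2 - 5 * r ^ 4 < 0 →
        (u + 6 * r ^ 2 - 5 * r ^ 4) ^ 2 > 4 * detJin u σ rm 0 κ₂ r →
        (∀ lam : ℝ,
          lam ^ 2 - (u + 6 * r ^ 2 - 5 * r ^ 4) * lam + detJin u σ rm 0 κ₂ r = 0 → lam < 0) ∧
        (∃ lam₁ lam₂ : ℝ, lam₁ < 0 ∧ 0 < lam₂ ∧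
          lam₁ ^ 2 - (u + 6 * r ^ 2 - 5 * r ^ 4) * lam₁ + detJanti u σ rm 0 κ₂ r = 0 ∧
          lam₂ ^ 2 - (u + 6 * r ^ 2 - 5 * r ^ 4) * lam₂ + detJanti u σ rm 0 κ₂ r = 0))) ∧
    (σ * r ^ 2 * (rm ^ 2 - r ^ 2) > 2 * κ₂ →
      detJin u σ rm 0 κ₂ r < 0 ∧ 0 < detJanti u σ rm 0 κ₂ r ∧
      (u + 6 * r ^ 2 - 5 * r ^ 4 < 0 →
        (u + 6 * r ^ 2 - 5 * r ^ 4) ^ 2 > 4 * detJanti u σ rm 0 κ₂ r →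
        (∀ lam : ℝ,
          lam ^ 2 - (u + 6 * r ^ 2 - 5 * r ^ 4) * lam + detJanti u σ rm 0 κ₂ r = 0 → lam < 0) ∧
        (∃ lam₁ lam₂ : ℝ, lam₁ < 0 ∧ 0 < lam₂ ∧
          lam₁ ^ 2 - (u + 6 * r ^ 2 - 5 * r ^ 4) * lam₁ + detJin u σ rm 0 κ₂ r = 0 ∧
          lam₂ ^ 2 - (u + 6 * r ^ 2 - 5 * r ^ 4) * lam₂ + detJin u σ rm 0 κ₂ r = 0))) := by

  constructor
  · intro h
    have hin : 0 < detJin u σ rm 0 κ₂ r := by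
      simp only [detJin]; nlinarith [mul_pos (sub_pos.mpr h) hκ₂, sq_nonneg κ₂]
    have hanti : detJanti u σ rm 0 κ₂ r < 0 := by
      simp only [detJanti]; nlinarith [mul_pos (sub_pos.mpr h) hκ₂, sq_nonneg κ₂]
    exact ⟨hin, hanti, fun hT _ => ⟨neg_roots _ _ hT hin, saddle_roots _ _ hanti⟩⟩
  · intro h
    have hin : detJin u σ rm 0 κ₂ r < 0 := by
      simp only [detJin]; nlinarith [mul_pos (sub_pos.mpr h) hκ₂, sq_nonneg κ₂]
    have hanti : 0 < detJanti u σ rm 0 κ₂ r := by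
      simp only [detJanti]; nlinarith [mul_pos (sub_pos.mpr h) hκ₂, sq_nonneg κ₂]
    exact ⟨hin, hanti, fun hT _ => ⟨neg_roots _ _ hT hanti, saddle_roots _ _ hin⟩⟩
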